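/- Let N, k, J be positive integers with N > 2^J (k+1). Let Φ_{k,1} and Φ_{k,2^J} be the circulant matrices of the stencils φ_{k,1} and φ_{k,2^J}, and for each i let P_{2^i} be the N×N 0-1 shift-sum matrix with shift 2^i. Then the scale-2^J operator decomposes as Φ_{k,2^J} = P_{2^{J−1}}^{k+1} P_{2^{J−2}}^{k+1} ⋯ P_{2^0}^{k+1} Φ_{k,1}. -/

import Mathlib

open Finset Matrix

/-- The scale-`j` order-`k` multiscale finite-difference stencil, as a vector in `ℝ^N`
(0-indexed by naturals `m < N`). -/
noncomputable def phiR (N k j : ℕ) (m : ℕ) : ℝ :=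
  if m = 0 then (-1 : ℝ) ^ k
  else if m ≤ N - j * (k + 1) then 0
  else (-1 : ℝ) ^ (k + (N - m) / j) * (Nat.choose k ((N - m) / j) : ℝ)

/-- The `N × N` circulant matrix of the stencil `φ_{k,j}`:
`(Φ_{k,j})_{m,n} = (φ_{k,j})_{(m - n) mod N}`. -/
noncomputable def PhiMat (N k j : ℕ) : Matrix (Fin N) (Fin N) ℝ :=
  Matrix.of fun m n => phiR N k j (((m : ℕ) + N - (n : ℕ)) % N)

/-- The `N × N` 0-1 shift-sum matrix `P_s` (0-indexed): entry `(m, n)` is `1` if `n = m`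
or `n = (m + s) mod N`, and `0` otherwise. -/
def Pmat (N s : ℕ) : Matrix (Fin N) (Fin N) ℝ :=
  Matrix.of fun m n =>
    if ((n : ℕ) = (m : ℕ) ∨ (n : ℕ) = ((m : ℕ) + s) % N) then 1 else 0

/-!
Polynomials in the cyclic shift `S` (ones at positions `(m, m + 1)`) are exactly the circulant
matrices, and a polynomial of degree `< N` is read off `S` without wrap-around. In this dictionary
`P_s = 1 + S^s` and, for `j (k + 1) ≤ N`, `Φ_{k,j} = (1 + S + ⋯ + S^(j-1)) (S^j - 1)^k`, whose
coefficients are precisely the stencil `φ_{k,j}`. The identities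
`1 + x + ⋯ + x^(2j-1) = (1 + x^j)(1 + ⋯ + x^(j-1))` and `x^(2j) - 1 = (1 + x^j)(x^j - 1)` give
`Φ_{k,2j} = P_j^(k+1) Φ_{k,j}`, and `J` such halvings of the scale reach `Φ_{k,1}`.
-/

open Polynomial

namespace Polynomial

theorem coeff_X_sub_one_pow {R : Type*} [Ring R] (k t : ℕ) :
    ((X - 1 : R[X]) ^ k).coeff t = (-1) ^ (k + t) * (k.choose t : R) := by
  rw [sub_eq_add_neg, ← C_1, ← C_neg, coeff_X_add_C_pow]
  rcases le_or_gt t k with htk | hkt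
  · obtain ⟨d, rfl⟩ := Nat.exists_eq_add_of_le htk
    rw [Nat.add_sub_cancel_left, show t + d + t = d + 2 * t by ring, pow_add _ d, pow_mul]
    simp
  · simp [Nat.choose_eq_zero_of_lt hkt]

theorem coeff_geom_sum_mul_expand {R : Type*} [CommSemiring R] {j : ℕ} (hj : 0 < j) (f : R[X])
    (r : ℕ) :
    ((∑ u ∈ range j, X ^ u) * expand R j f).coeff r = f.coeff (r / j) := by
  simp only [Finset.sum_mul, finsetSum_coeff, coeff_X_pow_mul', coeff_expand hj]
  rw [Finset.sum_eq_single (r % j)]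
  · rw [if_pos (Nat.mod_le r j), if_pos (Nat.dvd_sub_mod r), ← Nat.div_eq_sub_mod_div]
  · intro u hu hur
    have hu_mod : u % j = u := Nat.mod_eq_of_lt (mem_range.1 hu)
    split_ifs with hle hdvd
    · exact absurd (hu_mod.symm.trans ((Nat.modEq_iff_dvd' hle).mpr hdvd)) hur
    · rfl
    · rfl
  · exact fun h => absurd (mem_range.mpr (Nat.mod_lt r hj)) h

end Polynomial

noncomputable def stencilPoly (R : Type*) [CommRing R] (k j : ℕ) : R[X] :=
  (∑ u ∈ range j, X ^ u) * (X ^ j - 1) ^ k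

section StencilPoly

variable {R : Type*} [CommRing R]

theorem coeff_stencilPoly {j : ℕ} (hj : 0 < j) (k r : ℕ) :
    (stencilPoly R k j).coeff r = (-1) ^ (k + r / j) * (k.choose (r / j) : R) := by
  have hexpand : (X ^ j - 1 : R[X]) ^ k = expand R j ((X - 1) ^ k) := by simp
  rw [stencilPoly, hexpand, coeff_geom_sum_mul_expand hj, coeff_X_sub_one_pow]

theorem degree_stencilPoly_lt {j : ℕ} (hj : 0 < j) (k : ℕ) :
    (stencilPoly R k j).degree < ↑(j * (k + 1)) := by
  refine (degree_lt_iff_coeff_zero _ _).2 fun r hr => ?_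
  have hk : k < r / j := (Nat.le_div_iff_mul_le hj).2 (by linarith)
  rw [coeff_stencilPoly hj, Nat.choose_eq_zero_of_lt hk, Nat.cast_zero, mul_zero]

theorem stencilPoly_two_mul (k j : ℕ) :
    stencilPoly R k (2 * j) = (1 + X ^ j) ^ (k + 1) * stencilPoly R k j := by
  have hgeom :
      ∑ u ∈ range (2 * j), (X : R[X]) ^ u = (1 + X ^ j) * ∑ u ∈ range j, X ^ u := by
    rw [two_mul, sum_range_add, add_mul, one_mul, mul_sum]
    simp only [pow_add]
  have hdiff : (X : R[X]) ^ (2 * j) - 1 = (1 + X ^ j) * (X ^ j - 1) := by ring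
  simp only [stencilPoly]
  rw [hgeom, hdiff, mul_pow]
  ring

end StencilPoly

section Circulant

open Fin.NatCast

variable {R : Type*} [CommSemiring R] {N : ℕ} [NeZero N]

variable (R N) in
def shiftMat : Matrix (Fin N) (Fin N) R := circulant (Pi.single (-1) 1)

theorem circulant_single_one_mul (a b : Fin N) :
    circulant (Pi.single a (1 : R)) * circulant (Pi.single b 1) =
      circulant (Pi.single (a + b) 1) := by
  rw [circulant_mul]
  congr 1
  ext i
  simp [mulVec_single, circulant_apply, Pi.single_apply, sub_eq_iff_eq_add]

theorem shiftMat_pow (r : ℕ) : shiftMat R N ^ r = circulant (Pi.single (-(r : Fin N)) 1) := by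
  induction r with
  | zero => simp
  | succ r ih => rw [pow_succ, ih, shiftMat, circulant_single_one_mul, Nat.cast_succ, neg_add]

theorem aeval_shiftMat {p : R[X]} (hp : p.degree < N) :
    aeval (shiftMat R N) p = circulant fun d => p.coeff (-d).val := by
  have hnat : p.natDegree < N := by
    rcases eq_or_ne p 0 with rfl | hp0
    · exact Nat.pos_of_neZero N
    · exact (natDegree_lt_iff_degree_lt hp0).2 hp
  rw [aeval_eq_sum_range' hnat,
    ← Fin.sum_univ_eq_sum_range (fun i => p.coeff i • shiftMat R N ^ i)]
  ext m n
  simp [shiftMat_pow, Matrix.sum_apply, circulant_apply, Pi.single_apply, eq_comm (a := m - n),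
    neg_eq_iff_eq_neg]

end Circulant

theorem PhiMat_eq_circulant (N k j : ℕ) [NeZero N] :
    PhiMat N k j = circulant fun d : Fin N => phiR N k j d.val := by
  ext m n
  simp only [PhiMat, of_apply, circulant_apply, Fin.val_sub]
  congr 2
  omega

theorem phiR_eq_coeff_stencilPoly {N k j : ℕ} [NeZero N] (hj : 0 < j) (hjk : j * (k + 1) ≤ N)
    (d : Fin N) : phiR N k j d.val = (stencilPoly ℝ k j).coeff (-d).val := by
  rw [coeff_stencilPoly hj, Fin.val_neg]
  rcases eq_or_ne d 0 with rfl | hd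
  · simp [phiR]
  have hd0 : d.val ≠ 0 := Fin.val_ne_zero_iff.2 hd
  rw [if_neg hd, phiR, if_neg hd0]
  split_ifs with hfar
  · have hfar' : (k + 1) * j ≤ N - d.val := by rw [mul_comm]; omega
    have hk : k < (N - d.val) / j := (Nat.le_div_iff_mul_le hj).2 hfar'
    rw [Nat.choose_eq_zero_of_lt hk, Nat.cast_zero, mul_zero]
  · rfl

theorem PhiMat_eq_aeval_stencilPoly {N k j : ℕ} [NeZero N] (hj : 0 < j)
    (hjk : j * (k + 1) ≤ N) :
    PhiMat N k j = aeval (shiftMat ℝ N) (stencilPoly ℝ k j) := by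
  rw [aeval_shiftMat ((degree_stencilPoly_lt hj k).trans_le (by exact_mod_cast hjk)),
    PhiMat_eq_circulant]
  exact congrArg circulant (funext (phiR_eq_coeff_stencilPoly hj hjk))

theorem Pmat_eq_aeval {N s : ℕ} [NeZero N] (hs : 0 < s) (hsN : s < N) :
    Pmat N s = aeval (shiftMat ℝ N) (1 + X ^ s : ℝ[X]) := by
  have hdeg : (1 + X ^ s : ℝ[X]).degree < N := by
    refine (degree_lt_iff_coeff_zero _ _).2 fun r hr => ?_
    rw [coeff_add, coeff_one, coeff_X_pow, if_neg (by omega), if_neg (by omega), add_zero]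
  rw [aeval_shiftMat hdeg]
  ext m n
  simp only [Pmat, of_apply, circulant_apply, neg_sub, coeff_add, coeff_one, coeff_X_pow,
    Fin.val_sub]
  have hmod : ∀ x < 2 * N, x % N = if x < N then x else x - N := by
    intro x hx
    split_ifs with hxN
    · exact Nat.mod_eq_of_lt hxN
    · rw [Nat.mod_eq_sub_mod (by omega), Nat.mod_eq_of_lt (by omega)]
  have hm := m.isLt
  have hn := n.isLt
  rw [hmod (N - m + n) (by omega), hmod (m + s) (by omega)]
  split_ifs <;> norm_num <;> omega

theorem PhiMat_two_mul {N k j : ℕ} [NeZero N] (hj : 0 < j) (h : 2 * j * (k + 1) ≤ N) :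
    PhiMat N k (2 * j) = Pmat N j ^ (k + 1) * PhiMat N k j := by
  have hjk : j * (k + 1) ≤ N := by nlinarith
  rw [PhiMat_eq_aeval_stencilPoly (by omega) h, PhiMat_eq_aeval_stencilPoly hj hjk,
    Pmat_eq_aeval hj (by nlinarith), ← map_pow, ← map_mul, stencilPoly_two_mul]

theorem PhiMat_dyadic_decomposition_general (N k J : ℕ) (h : 2 ^ J * (k + 1) < N) :
    PhiMat N k (2 ^ J) =
      (((List.range J).reverse.map fun i => (Pmat N (2 ^ i)) ^ (k + 1)).prod) * PhiMat N k 1 := by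
  have : NeZero N := ⟨by omega⟩
  induction J with
  | zero => simp
  | succ J ih =>
    have hJ : 2 ^ J * (k + 1) < N := by rw [pow_succ] at h; nlinarith
    rw [List.range_succ, List.reverse_append, List.reverse_singleton, List.singleton_append,
      List.map_cons, List.prod_cons, mul_assoc, ← ih hJ, pow_succ',
      PhiMat_two_mul (by positivity) (by rw [← pow_succ']; exact h.le)]

theorem PhiMat_dyadic_decomposition (N k J : ℕ) (hN : 0 < N) (hk : 0 < k) (hJ : 0 < J)
    (h : 2 ^ J * (k + 1) < N) :
    PhiMat N k (2 ^ J) =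
      (((List.range J).reverse.map fun i => (Pmat N (2 ^ i)) ^ (k + 1)).prod) * PhiMat N k 1 :=
  PhiMat_dyadic_decomposition_general N k J h
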